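/- Let p and q be distinct primes with q ≡ 3 (mod 8), and let r be an integer with q dividing r² + p. Let R = R(q,r) in B = ℍ(−p, −q), let L_E be the Gross lattice of R, and let R⁰ = {x ∈ R : tr(x) = 0}. Then there exist integers b, c, f, a ℤ-lattice L with L_E ⊆ L ⊆ R⁰, and elements v₁, v₂, v₃ generating L over ℤ such that for all integers x, y, z, the reduced norm of x·v₁ + y·v₂ + z·v₃ equals p·x² + b·y² + f·y·z + c·z². -/

import Mathlib

open Quaternion

/-- The reduced trace of a quaternion: `tr v = v + star v` (as a scalar). -/
def trd {c₁ c₂ : ℚ} (v : ℍ[ℚ, c₁, c₂]) : ℚ := (v + star v).re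

/-- The reduced norm of a quaternion: `nrd v = v * star v` (as a scalar). -/
def nrd {c₁ c₂ : ℚ} (v : ℍ[ℚ, c₁, c₂]) : ℚ := (v * star v).re

/-- `α` in `B = ℍ(-p, -q)`, with `α² = -p`. -/
def qa (p q : ℕ) : ℍ[ℚ, -(p : ℚ), -(q : ℚ)] := ⟨0, 1, 0, 0⟩

/-- `β` in `B = ℍ(-p, -q)`, with `β² = -q`. -/
def qb (p q : ℕ) : ℍ[ℚ, -(p : ℚ), -(q : ℚ)] := ⟨0, 0, 1, 0⟩

/-- The ℤ-lattice `R(q,r)` spanned by `1, (1+β)/2, α(1+β)/2, (r+α)β/q`. -/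
def Rqr (p q : ℕ) (r : ℤ) : Submodule ℤ ℍ[ℚ, -(p : ℚ), -(q : ℚ)] :=
  Submodule.span ℤ
    ({1, ((2 : ℚ)⁻¹) • (1 + qb p q), ((2 : ℚ)⁻¹) • (qa p q * (1 + qb p q)),
      ((q : ℚ)⁻¹) • (((r : ℚ) • (1 : ℍ[ℚ, -(p : ℚ), -(q : ℚ)]) + qa p q) * qb p q)} :
      Set ℍ[ℚ, -(p : ℚ), -(q : ℚ)])

/-- The Gross lattice `{x ∈ ℤ + 2R : tr(x) = 0}` of a ℤ-lattice `R` in `ℍ(-p,-q)`. -/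
def GrossLattice (p q : ℕ) (R : Submodule ℤ ℍ[ℚ, -(p : ℚ), -(q : ℚ)]) :
    Set ℍ[ℚ, -(p : ℚ), -(q : ℚ)] :=
  {v | (∃ n : ℤ, ∃ u ∈ R, v = (n : ℍ[ℚ, -(p : ℚ), -(q : ℚ)]) + 2 • u) ∧ trd v = 0}

/-!
Take `L = ⟨α, β, (r + α)β/q⟩`. Since `αβ = q·(r + α)β/q - rβ`, twice each generator of `R(q,r)`
lies in `ℤ + L`, and `L ⊆ R(q,r)`; as `tr` vanishes on `L` and is `2n` on `n ∈ ℤ`, the trace-zero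
part of `ℤ + 2R(q,r)` lies in `L`. The basis `α, β, αβ` is orthogonal for the norm form, so
`nrd(xα + yβ + z(r + α)β/q) = p x² + q (y + r z/q)² + p z²/q`, which is
`p x² + q y² + 2r y z + c z²` with `c = (r² + p)/q ∈ ℤ`.
-/
lemma trd_eq_two_mul_re {c₁ c₂ : ℚ} (v : ℍ[ℚ, c₁, c₂]) : trd v = 2 * v.re := by
  simp [trd]
  ring

lemma mem_of_mem_span_one_sup_of_trd_eq_zero {c₁ c₂ : ℚ} {L : Submodule ℤ ℍ[ℚ, c₁, c₂]}
    (hL : ∀ w ∈ L, trd w = 0) {v : ℍ[ℚ, c₁, c₂]}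
    (hv : v ∈ Submodule.span ℤ {1} ⊔ L) (htr : trd v = 0) : v ∈ L := by
  obtain ⟨_, hm, w, hw, rfl⟩ := Submodule.mem_sup.mp hv
  obtain ⟨m, rfl⟩ := Submodule.mem_span_singleton.mp hm
  have hw0 := hL w hw
  rw [trd_eq_two_mul_re] at hw0 htr
  have hm0 : m = 0 := by
    simp only [QuaternionAlgebra.re_add, zsmul_eq_mul, mul_one,
      QuaternionAlgebra.re_intCast] at htr
    exact_mod_cast (by linarith : (m : ℚ) = 0)
  simpa [hm0] using hw

namespace Rqr

/- The generators `(1 + β)/2`, `α(1 + β)/2`, `(r + α)β/q` of `R(q,r)`. -/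

def e₁ (p q : ℕ) : ℍ[ℚ, -(p : ℚ), -(q : ℚ)] := (2 : ℚ)⁻¹ • (1 + qb p q)

def e₂ (p q : ℕ) : ℍ[ℚ, -(p : ℚ), -(q : ℚ)] := (2 : ℚ)⁻¹ • (qa p q * (1 + qb p q))

def e₃ (p q : ℕ) (r : ℤ) : ℍ[ℚ, -(p : ℚ), -(q : ℚ)] :=
  (q : ℚ)⁻¹ • (((r : ℚ) • 1 + qa p q) * qb p q)

def intermediateLattice (p q : ℕ) (r : ℤ) : Submodule ℤ ℍ[ℚ, -(p : ℚ), -(q : ℚ)] :=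
  Submodule.span ℤ {qa p q, qb p q, e₃ p q r}

variable {p q : ℕ} {r : ℤ}

lemma one_mem : 1 ∈ Rqr p q r := Submodule.subset_span (by simp)

lemma e₁_mem : e₁ p q ∈ Rqr p q r := Submodule.subset_span (by simp [e₁])

lemma e₂_mem : e₂ p q ∈ Rqr p q r := Submodule.subset_span (by simp [e₂])

lemma e₃_mem : e₃ p q r ∈ Rqr p q r := Submodule.subset_span (by simp [e₃])

lemma two_zsmul_e₁ : (2 : ℤ) • e₁ p q = 1 + qb p q := by
  rw [← Int.cast_smul_eq_zsmul ℚ]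
  ext <;> simp [e₁, qb]

lemma two_zsmul_e₂ : (2 : ℤ) • e₂ p q = qa p q + qa p q * qb p q := by
  rw [← Int.cast_smul_eq_zsmul ℚ]
  ext <;> simp [e₂, qa, qb]

lemma natCast_zsmul_e₃ (hq : q ≠ 0) : (q : ℤ) • e₃ p q r = r • qb p q + qa p q * qb p q := by
  rw [← Int.cast_smul_eq_zsmul ℚ, ← Int.cast_smul_eq_zsmul ℚ]
  ext <;> simp [e₃, qa, qb, hq]

lemma qa_mul_qb (hq : q ≠ 0) : qa p q * qb p q = (q : ℤ) • e₃ p q r - r • qb p q := by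
  rw [natCast_zsmul_e₃ hq]
  abel

lemma qb_mem : qb p q ∈ Rqr p q r := by
  rw [eq_sub_of_add_eq' two_zsmul_e₁.symm]
  exact sub_mem (Submodule.smul_mem _ _ e₁_mem) one_mem

lemma qa_mem (hq : q ≠ 0) : qa p q ∈ Rqr p q r := by
  have : qa p q = (2 : ℤ) • e₂ p q - (q : ℤ) • e₃ p q r + r • qb p q := by
    rw [two_zsmul_e₂, natCast_zsmul_e₃ hq]
    abel
  rw [this]
  exact add_mem (sub_mem (Submodule.smul_mem _ _ e₂_mem) (Submodule.smul_mem _ _ e₃_mem))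
    (Submodule.smul_mem _ _ qb_mem)

lemma intermediateLattice_le (hq : q ≠ 0) : intermediateLattice p q r ≤ Rqr p q r := by
  rw [intermediateLattice, Submodule.span_le]
  rintro _ (rfl | rfl | rfl)
  exacts [qa_mem hq, qb_mem, e₃_mem]

lemma trd_eq_zero_of_mem_intermediateLattice {v : ℍ[ℚ, -(p : ℚ), -(q : ℚ)]}
    (hv : v ∈ intermediateLattice p q r) : trd v = 0 := by
  suffices intermediateLattice p q r ≤
      LinearMap.ker ((QuaternionAlgebra.reₗ _ _ _).restrictScalars ℤ) by
    simpa [trd_eq_two_mul_re] using this hv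
  rw [intermediateLattice, Submodule.span_le]
  rintro _ (rfl | rfl | rfl) <;> simp [qa, qb, e₃]

lemma two_zsmul_mem_span_one_sup (hq : q ≠ 0) {u : ℍ[ℚ, -(p : ℚ), -(q : ℚ)]}
    (hu : u ∈ Rqr p q r) : (2 : ℤ) • u ∈ Submodule.span ℤ {1} ⊔ intermediateLattice p q r := by
  set M := Submodule.span ℤ {1} ⊔ intermediateLattice p q r
  have h1 : 1 ∈ M := Submodule.mem_sup_left (Submodule.mem_span_singleton_self 1)
  have hL : ∀ w ∈ ({qa p q, qb p q, e₃ p q r} : Set _), w ∈ M :=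
    fun w hw => Submodule.mem_sup_right (Submodule.subset_span hw)
  induction hu using Submodule.span_induction with
  | mem x hx =>
    rcases hx with rfl | rfl | rfl | rfl
    · exact M.smul_mem _ h1
    · change (2 : ℤ) • e₁ p q ∈ M
      rw [two_zsmul_e₁]
      exact add_mem h1 (hL _ (by simp))
    · change (2 : ℤ) • e₂ p q ∈ M
      rw [two_zsmul_e₂, qa_mul_qb (r := r) hq]
      exact add_mem (hL _ (by simp))
        (sub_mem (M.smul_mem _ (hL _ (by simp))) (M.smul_mem _ (hL _ (by simp))))
    · exact M.smul_mem _ (hL (e₃ p q r) (by simp))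
  | zero => simp
  | add x y _ _ hx hy => rw [smul_add]; exact add_mem hx hy
  | smul a x _ hx => rw [smul_comm]; exact M.smul_mem a hx

theorem grossLattice_subset (hq : q ≠ 0) :
    GrossLattice p q (Rqr p q r) ⊆ intermediateLattice p q r := by
  rintro _ ⟨⟨n, u, hu, rfl⟩, htr⟩
  refine mem_of_mem_span_one_sup_of_trd_eq_zero
    (fun _ => trd_eq_zero_of_mem_intermediateLattice) (add_mem ?_ ?_) htr
  · exact Submodule.mem_sup_left (Submodule.mem_span_singleton.mpr ⟨n, by simp⟩)
  · simpa [two_smul] using two_zsmul_mem_span_one_sup hq hu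

theorem nrd_intermediateLattice_basis (hq : q ≠ 0) {c : ℤ} (hc : r ^ 2 + p = q * c)
    (x y z : ℤ) :
    nrd (x • qa p q + y • qb p q + z • e₃ p q r) =
      p * x ^ 2 + q * y ^ 2 + 2 * r * y * z + c * z ^ 2 := by
  have hcQ : (r : ℚ) ^ 2 + p = q * c := by exact_mod_cast hc
  simp only [← Int.cast_smul_eq_zsmul ℚ, nrd, qa, qb, e₃]
  simp [QuaternionAlgebra.re_mul]
  field_simp
  linear_combination (z : ℚ) ^ 2 * hcQ

end Rqr

theorem intermediate_lattice_Rqr_general (p q : ℕ) (hq : q.Prime) (r : ℤ) (hdvd : (q : ℤ) ∣ r ^ 2 + (p : ℤ)) :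
    ∃ (b c f : ℤ) (L : Submodule ℤ ℍ[ℚ, -(p : ℚ), -(q : ℚ)])
      (v₁ v₂ v₃ : ℍ[ℚ, -(p : ℚ), -(q : ℚ)]),
      GrossLattice p q (Rqr p q r) ⊆ (L : Set ℍ[ℚ, -(p : ℚ), -(q : ℚ)]) ∧
      (L : Set ℍ[ℚ, -(p : ℚ), -(q : ℚ)]) ⊆ {v | v ∈ Rqr p q r ∧ trd v = 0} ∧
      L = Submodule.span ℤ ({v₁, v₂, v₃} : Set ℍ[ℚ, -(p : ℚ), -(q : ℚ)]) ∧
      ∀ x y z : ℤ,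
        nrd (x • v₁ + y • v₂ + z • v₃) =
          (p : ℚ) * (x : ℚ) ^ 2 + (b : ℚ) * (y : ℚ) ^ 2 + (f : ℚ) * (y : ℚ) * (z : ℚ) +
            (c : ℚ) * (z : ℚ) ^ 2 := by
  obtain ⟨c, hc⟩ := hdvd
  refine ⟨q, c, 2 * r, Rqr.intermediateLattice p q r, qa p q, qb p q, Rqr.e₃ p q r,
    Rqr.grossLattice_subset hq.ne_zero,
    fun v hv => ⟨Rqr.intermediateLattice_le hq.ne_zero hv,
      Rqr.trd_eq_zero_of_mem_intermediateLattice hv⟩, rfl, fun x y z => ?_⟩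
  rw [Rqr.nrd_intermediateLattice_basis hq.ne_zero hc]
  push_cast
  ring

theorem intermediate_lattice_Rqr (p q : ℕ) (hp : p.Prime) (hq : q.Prime) (hpq : p ≠ q)
    (hq8 : q % 8 = 3) (r : ℤ) (hdvd : (q : ℤ) ∣ r ^ 2 + (p : ℤ)) :
    ∃ (b c f : ℤ) (L : Submodule ℤ ℍ[ℚ, -(p : ℚ), -(q : ℚ)])
      (v₁ v₂ v₃ : ℍ[ℚ, -(p : ℚ), -(q : ℚ)]),
      GrossLattice p q (Rqr p q r) ⊆ (L : Set ℍ[ℚ, -(p : ℚ), -(q : ℚ)]) ∧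
      (L : Set ℍ[ℚ, -(p : ℚ), -(q : ℚ)]) ⊆ {v | v ∈ Rqr p q r ∧ trd v = 0} ∧
      L = Submodule.span ℤ ({v₁, v₂, v₃} : Set ℍ[ℚ, -(p : ℚ), -(q : ℚ)]) ∧
      ∀ x y z : ℤ,
        nrd (x • v₁ + y • v₂ + z • v₃) =
          (p : ℚ) * (x : ℚ) ^ 2 + (b : ℚ) * (y : ℚ) ^ 2 + (f : ℚ) * (y : ℚ) * (z : ℚ) +
            (c : ℚ) * (z : ℚ) ^ 2 :=
  intermediate_lattice_Rqr_general p q hq r hdvd
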